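/- Let k ≥ 1 and let (T_i)_{i∈I} be a family of nonzero nonnegative k×k real matrices, each of whose columns is either identically zero or has all entries positive, and suppose there is a real number Δ ≥ 0 such that the Hilbert-metric diameter satisfies Δ(T_i) ≤ Δ for every i ∈ I. Then for every sequence of indices i₁, i₂, …, writing T̃_n = T_{i₁}T_{i₂}⋯T_{i_n}, there exists a vector x̃ ∈ C′ such that for every x ∈ C′ the normalized images T̃_n·x converge to x̃ as n → ∞, the convergence being uniform in x ∈ C′; in particular the limit x̃ is independent of x (it depends only on the sequence of indices). -/

import Mathlib

open Filter Topology

noncomputable section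

/-- The set `C'` of vectors in `ℝ^k` of Euclidean norm 1 with all entries positive. -/
def posUnit (k : ℕ) : Set (Fin k → ℝ) :=
  {v | Real.sqrt (∑ i, v i ^ 2) = 1 ∧ ∀ i, 0 < v i}

/-- The Hilbert projective metric on positive vectors:
`d_H(x,y) = log ((max_i x_i/y_i) · (max_i y_i/x_i))`. -/
def hilbertDist {k : ℕ} (x y : Fin k → ℝ) : ℝ :=
  Real.log ((⨆ i : Fin k, x i / y i) * (⨆ i : Fin k, y i / x i))

/-- The projective action of a matrix on `C'`: `T·v = Tv / ‖Tv‖`. -/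
def matAct {k : ℕ} (T : Matrix (Fin k) (Fin k) ℝ) (v : Fin k → ℝ) : Fin k → ℝ :=
  (Real.sqrt (∑ i, (T.mulVec v i) ^ 2))⁻¹ • T.mulVec v


namespace Stmt0Aux
set_option linter.unusedSectionVars false
set_option maxHeartbeats 1000000

variable {k : ℕ}

def Pos (v : Fin k → ℝ) : Prop := ∀ i, 0 < v i

def S (x y : Fin k → ℝ) : ℝ := ⨆ i, x i / y i

def Nrm (v : Fin k → ℝ) : ℝ := Real.sqrt (∑ i, v i ^ 2)

def Pm {I : Type*} (T : I → Matrix (Fin k) (Fin k) ℝ) (idx : ℕ → I) (n : ℕ) :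
    Matrix (Fin k) (Fin k) ℝ := ((List.range n).map fun j => T (idx j)).prod

lemma Pm_succ_front {I : Type*} (T : I → Matrix (Fin k) (Fin k) ℝ) (idx : ℕ → I) (n : ℕ) :
    Pm T idx (n + 1) = T (idx 0) * Pm T (fun j => idx (j + 1)) n := by
  unfold Pm
  rw [List.range_succ_eq_map, List.map_cons, List.prod_cons, List.map_map]
  rfl

lemma Pm_add {I : Type*} (T : I → Matrix (Fin k) (Fin k) ℝ) (idx : ℕ → I) (n m : ℕ) :
    Pm T idx (n + m) = Pm T idx n * Pm T (fun j => idx (n + j)) m := by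
  unfold Pm
  rw [List.range_add, List.map_append, List.prod_append, List.map_map]
  rfl

lemma Pm_pos {I : Type*} {T : I → Matrix (Fin k) (Fin k) ℝ}
    (hpos : ∀ i v, Pos v → Pos ((T i).mulVec v)) (idx : ℕ → I) (n : ℕ) :
    ∀ {v : Fin k → ℝ}, Pos v → Pos ((Pm T idx n).mulVec v) := by
  induction n with
  | zero => intro v hv; simpa [Pm, Matrix.one_mulVec] using hv
  | succ n ih =>
      intro v hv
      have hsplit : Pm T idx (n + 1) = Pm T idx n * T (idx n) := by
        unfold Pm
        rw [List.range_succ, List.map_append, List.prod_append]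
        simp
      rw [hsplit, ← Matrix.mulVec_mulVec]
      exact ih (hpos (idx n) v hv)

section
variable [Nonempty (Fin k)]

lemma le_S (x y : Fin k → ℝ) (i : Fin k) : x i / y i ≤ S x y :=
  le_ciSup (Set.Finite.bddAbove (Set.finite_range (fun i => x i / y i))) i

lemma S_le {x y : Fin k → ℝ} {a : ℝ} (h : ∀ i, x i / y i ≤ a) : S x y ≤ a := ciSup_le h

lemma S_pos {x y : Fin k → ℝ} (hx : Pos x) (hy : Pos y) : 0 < S x y :=
  lt_of_lt_of_le (div_pos (hx (Classical.arbitrary _)) (hy _)) (le_S x y _)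

lemma le_S_mul (x : Fin k → ℝ) {y : Fin k → ℝ} (hy : Pos y) (i : Fin k) :
    x i ≤ S x y * y i := (div_le_iff₀ (hy i)).mp (le_S x y i)

lemma one_le_ratio {x y : Fin k → ℝ} (hx : Pos x) (hy : Pos y) : 1 ≤ S x y * S y x := by
  have i := Classical.arbitrary (Fin k)
  have h1 : x i / y i * (y i / x i) = 1 := by
    have := (hx i).ne'
    have := (hy i).ne'
    field_simp
  calc (1:ℝ) = x i / y i * (y i / x i) := h1.symm
  _ ≤ S x y * S y x := by
      apply mul_le_mul (le_S x y i) (le_S y x i) (div_nonneg (hy i).le (hx i).le) (S_pos hx hy).le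

lemma S_smul {c d : ℝ} (hc : 0 < c) (hd : 0 < d) (x y : Fin k → ℝ) :
    S (c • x) (d • y) = (c / d) * S x y := by
  have hpt : ∀ i, (c • x) i / (d • y) i = (c/d) * (x i / y i) := by
    intro i
    simp [Pi.smul_apply, smul_eq_mul, mul_div_mul_comm]
  have hcd : 0 < c / d := div_pos hc hd
  apply le_antisymm
  · apply S_le
    intro i
    rw [hpt i]
    exact mul_le_mul_of_nonneg_left (le_S x y i) hcd.le
  · rw [← le_div_iff₀' hcd]
    apply S_le
    intro i
    rw [le_div_iff₀' hcd, ← hpt i]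
    exact le_S _ _ i

lemma ratio_smul {c d : ℝ} (hc : 0 < c) (hd : 0 < d) (x y : Fin k → ℝ) :
    S (c • x) (d • y) * S (d • y) (c • x) = S x y * S y x := by
  rw [S_smul hc hd, S_smul hd hc]
  have h1 : c / d * (d / c) = 1 := by field_simp
  field_simp

lemma Nrm_pos {x : Fin k → ℝ} (hx : Pos x) : 0 < Nrm x := by
  apply Real.sqrt_pos.mpr
  apply Finset.sum_pos (fun i _ => by have := hx i; positivity) Finset.univ_nonempty

lemma Nrm_smul {c : ℝ} (hc : 0 ≤ c) (x : Fin k → ℝ) : Nrm (c • x) = c * Nrm x := by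
  unfold Nrm
  rw [show ∑ i, (c • x) i ^ 2 = c ^ 2 * ∑ i, x i ^ 2 by
      rw [Finset.mul_sum]; apply Finset.sum_congr rfl; intro i _
      simp [Pi.smul_apply, smul_eq_mul]; ring,
    Real.sqrt_mul (by positivity), Real.sqrt_sq hc]

lemma normalize_posUnit {x : Fin k → ℝ} (hx : Pos x) :
    Nrm ((Nrm x)⁻¹ • x) = 1 ∧ Pos ((Nrm x)⁻¹ • x) := by
  have h0 := Nrm_pos hx
  constructor
  · rw [Nrm_smul (by positivity)]
    field_simp
  · intro i
    simp only [Pi.smul_apply, smul_eq_mul]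
    have := hx i
    positivity

lemma mulVec_mono {T : Matrix (Fin k) (Fin k) ℝ} (hnn : ∀ a b, 0 ≤ T a b)
    {f g : Fin k → ℝ} (h : ∀ i, f i ≤ g i) (a : Fin k) : T.mulVec f a ≤ T.mulVec g a := by
  simp only [Matrix.mulVec, dotProduct]
  exact Finset.sum_le_sum fun b _ => mul_le_mul_of_nonneg_left (h b) (hnn a b)

lemma contract {T : Matrix (Fin k) (Fin k) ℝ}
    (hnn : ∀ a b, 0 ≤ T a b)
    (hpos : ∀ v, Pos v → Pos (T.mulVec v)) {E : ℝ} (hE : 1 ≤ E)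
    (hd : ∀ z y, Pos z → Pos y →
      S (T.mulVec z) (T.mulVec y) * S (T.mulVec y) (T.mulVec z) ≤ E)
    {x y : Fin k → ℝ} (hx : Pos x) (hy : Pos y) :
    S (T.mulVec x) (T.mulVec y) * S (T.mulVec y) (T.mulVec x)
      ≤ 1 + (1 - E⁻¹) * (S x y * S y x - 1) := by
  have hE0 : (0:ℝ) < E := lt_of_lt_of_le one_pos hE
  have hsyx : 0 < S y x := S_pos hy hx
  set m : ℝ := (S y x)⁻¹ with hm
  have hm0 : 0 < m := inv_pos.mpr hsyx
  set M : ℝ := S x y with hMdef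
  have hM0 : 0 < M := S_pos hx hy
  have hxlb : ∀ i, m * y i ≤ x i := by
    intro i
    rw [hm, inv_mul_le_iff₀ hsyx]
    exact le_S_mul y hx i
  have hxub : ∀ i, x i ≤ M * y i := le_S_mul x hy
  set X := T.mulVec x with hXdef
  set Y := T.mulVec y with hYdef
  have hXpos : Pos X := hpos x hx
  have hYpos : Pos Y := hpos y hy
  have main : ∀ ε ∈ Set.Ioo (0:ℝ) m,
      S X Y * S Y X ≤ 1 + (1 - E⁻¹) * ((M - (m - ε)) / (m - ε)) := by
    intro ε hε
    obtain ⟨hε0, hεm⟩ := hε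
    set α : ℝ := m - ε with hα
    have hα0 : 0 < α := by rw [hα]; linarith
    set z : Fin k → ℝ := fun i => x i - α * y i with hz
    have hzpos : Pos z := fun i => by
      have h1 := hxlb i; have h2 := hy i
      simp only [hz]; nlinarith
    set Z := T.mulVec z with hZdef
    have hZpos : Pos Z := hpos z hzpos
    have hXeq : ∀ i, X i = α * Y i + Z i := by
      have hxs : x = α • y + z := by funext j; simp [hz]
      intro i
      rw [hXdef, hxs, Matrix.mulVec_add, Matrix.mulVec_smul]
      simp [hYdef, hZdef]
    set b : ℝ := S Z Y with hb
    set a : ℝ := (S Y Z)⁻¹ with ha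
    have hSZY : 0 < b := S_pos hZpos hYpos
    have hSYZ : 0 < S Y Z := S_pos hYpos hZpos
    have ha0 : 0 < a := inv_pos.mpr hSYZ
    have hbub : ∀ i, Z i ≤ b * Y i := le_S_mul Z hYpos
    have halb : ∀ i, a * Y i ≤ Z i := by
      intro i
      rw [ha, inv_mul_le_iff₀ hSYZ]
      exact le_S_mul Y hZpos i
    have hba : b ≤ a * E := by
      have h1 : b * S Y Z ≤ E := hd z y hzpos hy
      rw [ha]
      rw [inv_mul_eq_div, le_div_iff₀ hSYZ] at *
      linarith [h1]
    have hbM : b ≤ M - α := by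
      apply S_le
      intro i
      rw [div_le_iff₀ (hYpos i)]
      have h1 : ∀ j, z j ≤ ((M - α) • y) j := by
        intro j
        have := hxub j
        simp only [Pi.smul_apply, smul_eq_mul, hz]
        nlinarith
      have h2 := mulVec_mono hnn h1 i
      rwa [Matrix.mulVec_smul, Pi.smul_apply, smul_eq_mul] at h2
    have hab : a ≤ b := by
      have i := Classical.arbitrary (Fin k)
      have h1 := halb i
      have h2 := hbub i
      have := hYpos i
      nlinarith
    have hSXY : S X Y ≤ α + b := by
      apply S_le
      intro i
      rw [div_le_iff₀ (hYpos i), hXeq i]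
      nlinarith [hbub i]
    have hSYX : S Y X ≤ (α + a)⁻¹ := by
      apply S_le
      intro i
      have hαa : 0 < α + a := by linarith
      rw [div_le_iff₀ (hXpos i), inv_mul_eq_div, le_div_iff₀ hαa, hXeq i]
      nlinarith [halb i]
    have hprod : S X Y * S Y X ≤ (α + b) * (α + a)⁻¹ :=
      mul_le_mul hSXY hSYX (S_pos hYpos hXpos).le (by positivity)
    have hP : α*E*(b-a) ≤ (E-1)*(M-α)*(α+a) := by
      have hMα : 0 < M - α := lt_of_lt_of_le hSZY hbM
      rcases le_or_gt (a*E) (M-α) with h|h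
      · nlinarith [mul_le_mul_of_nonneg_left h (mul_nonneg hα0.le (sub_nonneg.mpr hE)),
          mul_nonneg (mul_nonneg (sub_nonneg.mpr hE) hMα.le) ha0.le,
          mul_le_mul_of_nonneg_left hba (mul_nonneg hα0.le hE0.le)]
      · nlinarith [mul_le_mul_of_nonneg_left hbM (mul_nonneg hα0.le hE0.le),
          mul_le_mul_of_nonneg_left h.le hα0.le,
          mul_nonneg (mul_nonneg (sub_nonneg.mpr hE) hMα.le) ha0.le]
    have hdiv : (α + b) * (α + a)⁻¹ ≤ (α*E + (E-1)*(M-α))/(α*E) := by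
      have hαa : 0 < α + a := by linarith
      rw [← div_eq_mul_inv, div_le_div_iff₀ hαa (by positivity)]
      nlinarith [hP]
    have heq : (α*E + (E-1)*(M-α))/(α*E) = 1 + (1 - E⁻¹) * ((M - α) / α) := by
      field_simp
    calc S X Y * S Y X ≤ (α + b) * (α + a)⁻¹ := hprod
      _ ≤ (α*E + (E-1)*(M-α))/(α*E) := hdiv
      _ = 1 + (1 - E⁻¹) * ((M - α) / α) := heq
  have hlim : Tendsto (fun ε : ℝ => 1 + (1 - E⁻¹) * ((M - (m - ε)) / (m - ε)))
      (𝓝[>] 0) (𝓝 (1 + (1 - E⁻¹) * ((M - m) / m))) := by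
    apply Tendsto.mono_left _ nhdsWithin_le_nhds
    have hc : ContinuousAt (fun ε : ℝ => 1 + (1 - E⁻¹) * ((M - (m - ε)) / (m - ε))) 0 := by
      apply ContinuousAt.add continuousAt_const
      apply ContinuousAt.mul continuousAt_const
      apply ContinuousAt.div (by fun_prop) (by fun_prop)
      simpa using hm0.ne'
    have h0 : (fun ε : ℝ => 1 + (1 - E⁻¹) * ((M - (m - ε)) / (m - ε))) 0
        = 1 + (1 - E⁻¹) * ((M - m) / m) := by norm_num
    rw [← h0]
    exact hc.tendsto
  have hfin : S X Y * S Y X ≤ 1 + (1 - E⁻¹) * ((M - m) / m) := by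
    refine ge_of_tendsto hlim ?_
    filter_upwards [Ioo_mem_nhdsGT_of_mem (Set.left_mem_Ico.mpr hm0)] with ε hε
    exact main ε hε
  have : (M - m) / m = M * S y x - 1 := by
    rw [hm]
    field_simp
  rw [this] at hfin
  exact hfin

lemma mulVec_pos {T : Matrix (Fin k) (Fin k) ℝ} (hnn : ∀ a b, 0 ≤ T a b) (hnz : T ≠ 0)
    (hcol : ∀ b, (∀ a, T a b = 0) ∨ (∀ a, 0 < T a b)) {v : Fin k → ℝ} (hv : Pos v) :
    Pos (T.mulVec v) := by
  obtain ⟨b₀, hb₀⟩ : ∃ b, ∀ a, 0 < T a b := by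
    by_contra h
    push_neg at h
    apply hnz
    ext a b
    rcases hcol b with h0 | hp
    · exact h0 a
    · exact absurd hp (by intro hh; obtain ⟨a', ha'⟩ := h b; exact absurd (hh a') (not_lt.mpr ha'))
  intro a
  simp only [Matrix.mulVec, dotProduct]
  have h1 : 0 < T a b₀ * v b₀ := mul_pos (hb₀ a) (hv b₀)
  refine lt_of_lt_of_le h1 ?_
  exact Finset.single_le_sum (f := fun b => T a b * v b)
    (fun b _ => mul_nonneg (hnn a b) (hv b).le) (Finset.mem_univ b₀)

end

section
variable [Nonempty (Fin k)]

lemma key {I : Type*} {T : I → Matrix (Fin k) (Fin k) ℝ}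
    (hnn : ∀ i a b, 0 ≤ (T i) a b)
    (hpos : ∀ i v, Pos v → Pos ((T i).mulVec v)) {E : ℝ} (hE : 1 ≤ E)
    (hd : ∀ i z y, Pos z → Pos y →
      S ((T i).mulVec z) ((T i).mulVec y) * S ((T i).mulVec y) ((T i).mulVec z) ≤ E)
    (n : ℕ) (hn : 1 ≤ n) : ∀ (idx : ℕ → I) (v w : Fin k → ℝ), Pos v → Pos w →
      S ((Pm T idx n).mulVec v) ((Pm T idx n).mulVec w) *
        S ((Pm T idx n).mulVec w) ((Pm T idx n).mulVec v)
        ≤ 1 + (1 - E⁻¹) ^ (n - 1) * (E - 1) := by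
  induction n, hn using Nat.le_induction with
  | base =>
      intro idx v w hv hw
      have h1 : Pm T idx 1 = T (idx 0) := by
        show (List.map (fun j => T (idx j)) (List.range 1)).prod = T (idx 0)
        rw [List.range_succ]
        simp
      rw [h1]
      calc S ((T (idx 0)).mulVec v) ((T (idx 0)).mulVec w) *
            S ((T (idx 0)).mulVec w) ((T (idx 0)).mulVec v) ≤ E := hd (idx 0) v w hv hw
        _ = 1 + (1 - E⁻¹) ^ (1 - 1) * (E - 1) := by norm_num
  | succ n hn ih =>
      intro idx v w hv hw
      have hinv : (0:ℝ) < E⁻¹ := by positivity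
      have hlam0 : (0:ℝ) ≤ 1 - E⁻¹ := by
        have : E⁻¹ ≤ 1 := inv_le_one_of_one_le₀ hE
        linarith
      rw [Pm_succ_front, ← Matrix.mulVec_mulVec, ← Matrix.mulVec_mulVec]
      set Q := Pm T (fun j => idx (j + 1)) n with hQ
      have hQv : Pos (Q.mulVec v) := Pm_pos hpos _ n hv
      have hQw : Pos (Q.mulVec w) := Pm_pos hpos _ n hw
      have hc := contract (hnn (idx 0)) (hpos (idx 0)) hE (hd (idx 0)) hQv hQw
      have hih := ih (fun j => idx (j + 1)) v w hv hw
      calc S ((T (idx 0)).mulVec (Q.mulVec v)) ((T (idx 0)).mulVec (Q.mulVec w)) *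
            S ((T (idx 0)).mulVec (Q.mulVec w)) ((T (idx 0)).mulVec (Q.mulVec v))
          ≤ 1 + (1 - E⁻¹) * (S (Q.mulVec v) (Q.mulVec w) * S (Q.mulVec w) (Q.mulVec v) - 1) := hc
        _ ≤ 1 + (1 - E⁻¹) * ((1 - E⁻¹) ^ (n - 1) * (E - 1)) := by
            have := mul_le_mul_of_nonneg_left (sub_le_sub_right hih 1) hlam0
            simpa using by linarith [this]
        _ = 1 + (1 - E⁻¹) ^ (n + 1 - 1) * (E - 1) := by
            rw [show n + 1 - 1 = (n - 1) + 1 by omega, pow_succ]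
            ring

lemma one_le_S_unit {u v : Fin k → ℝ} (hu : u ∈ posUnit k) (hv : v ∈ posUnit k) : 1 ≤ S v u := by
  by_contra h
  push_neg at h
  have hlt : ∀ i, v i < u i := by
    intro i
    calc v i ≤ S v u * u i := le_S_mul v hu.2 i
    _ < 1 * u i := by
        apply mul_lt_mul_of_pos_right h (hu.2 i)
    _ = u i := one_mul _
  have hsum : ∑ i, v i ^ 2 < ∑ i, u i ^ 2 := by
    apply Finset.sum_lt_sum_of_nonempty Finset.univ_nonempty
    intro i _
    have h1 := hv.2 i
    have h2 := hlt i
    nlinarith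
  have := Real.sqrt_lt_sqrt (by positivity) hsum
  rw [hv.1, hu.1] at this
  exact lt_irrefl 1 this

lemma euclid {u v : Fin k → ℝ} (hu : u ∈ posUnit k) (hv : v ∈ posUnit k) :
    Nrm (u - v) ≤ 2 * (S u v * S v u - 1) := by
  set R := S u v * S v u with hR
  have hR1 : 1 ≤ R := one_le_ratio hu.2 hv.2
  have hsvu : 1 ≤ S v u := one_le_S_unit hu hv
  have hsuv : 1 ≤ S u v := one_le_S_unit hv hu
  have h1 : ∀ i, |u i - v i| ≤ (R - 1) * (u i + v i) := by
    intro i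
    have hSR : S u v ≤ R := by nlinarith [S_pos hu.2 hv.2]
    have hSR' : S v u ≤ R := by nlinarith [S_pos hv.2 hu.2]
    have h2 : u i ≤ R * v i := by
      calc u i ≤ S u v * v i := le_S_mul u hv.2 i
      _ ≤ R * v i := mul_le_mul_of_nonneg_right hSR (hv.2 i).le
    have h3 : v i ≤ R * u i := by
      calc v i ≤ S v u * u i := le_S_mul v hu.2 i
      _ ≤ R * u i := mul_le_mul_of_nonneg_right hSR' (hu.2 i).le
    rw [abs_le]
    constructor <;> nlinarith [hu.2 i, hv.2 i]
  have hsu : ∑ i, u i ^ 2 = 1 := Real.sqrt_eq_one.mp hu.1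
  have hsv : ∑ i, v i ^ 2 = 1 := Real.sqrt_eq_one.mp hv.1
  have hsum : ∑ i, ((u - v) i) ^ 2 ≤ (2 * (R - 1)) ^ 2 := by
    calc ∑ i, ((u - v) i) ^ 2 ≤ ∑ i, (R - 1) ^ 2 * (2 * (u i ^ 2 + v i ^ 2)) := by
          apply Finset.sum_le_sum
          intro i _
          have := h1 i
          have habs : ((u - v) i) ^ 2 = |u i - v i| ^ 2 := by
            rw [Pi.sub_apply, sq_abs]
          rw [habs]
          nlinarith [sq_nonneg (u i - v i), sq_nonneg (R - 1), abs_nonneg (u i - v i),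
            sq_nonneg (u i + v i)]
      _ = (R - 1) ^ 2 * (2 * ((∑ i, u i ^ 2) + ∑ i, v i ^ 2)) := by
          rw [← Finset.mul_sum]
          congr 1
          rw [← Finset.mul_sum, ← Finset.sum_add_distrib]
      _ = (2 * (R - 1)) ^ 2 := by rw [hsu, hsv]; ring
  calc Nrm (u - v) ≤ Real.sqrt ((2 * (R - 1)) ^ 2) := Real.sqrt_le_sqrt hsum
  _ = 2 * (R - 1) := Real.sqrt_sq (by linarith)

lemma norm_le_Nrm (w : Fin k → ℝ) : ‖w‖ ≤ Nrm w := by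
  show ‖w‖ ≤ Real.sqrt (∑ i, w i ^ 2)
  rw [pi_norm_le_iff_of_nonneg (Real.sqrt_nonneg _)]
  intro i
  rw [Real.norm_eq_abs, ← Real.sqrt_sq_eq_abs]
  apply Real.sqrt_le_sqrt
  exact Finset.single_le_sum (f := fun j => w j ^ 2) (fun j _ => sq_nonneg _) (Finset.mem_univ i)

lemma Nrm_le_norm (w : Fin k → ℝ) : Nrm w ≤ Real.sqrt k * ‖w‖ := by
  have h1 : ∑ i, w i ^ 2 ≤ (k : ℝ) * ‖w‖ ^ 2 := by
    calc ∑ i, w i ^ 2 ≤ ∑ _i : Fin k, ‖w‖ ^ 2 := by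
          apply Finset.sum_le_sum
          intro i _
          rw [← sq_abs]
          exact pow_le_pow_left₀ (abs_nonneg _) (norm_le_pi_norm w i) 2
      _ = (k : ℝ) * ‖w‖ ^ 2 := by simp [Finset.sum_const, Finset.card_univ]
  calc Nrm w ≤ Real.sqrt ((k : ℝ) * ‖w‖ ^ 2) := Real.sqrt_le_sqrt h1
  _ = Real.sqrt k * ‖w‖ := by
      rw [Real.sqrt_mul (Nat.cast_nonneg k), Real.sqrt_sq (norm_nonneg _)]

lemma matAct_eq (T : Matrix (Fin k) (Fin k) ℝ) (v : Fin k → ℝ) :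
    matAct T v = (Nrm (T.mulVec v))⁻¹ • T.mulVec v := rfl

lemma matAct_smul_form {T : Matrix (Fin k) (Fin k) ℝ}
    (hpos : ∀ v, Pos v → Pos (T.mulVec v)) {v : Fin k → ℝ} (hv : Pos v) :
    ∃ c : ℝ, 0 < c ∧ matAct T ((Nrm v)⁻¹ • v) = c • T.mulVec v := by
  have hNv : 0 < Nrm v := Nrm_pos hv
  have hNTv : 0 < Nrm (T.mulVec v) := Nrm_pos (hpos v hv)
  refine ⟨(((Nrm v)⁻¹ * Nrm (T.mulVec v))⁻¹) * (Nrm v)⁻¹, by positivity, ?_⟩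
  rw [matAct_eq, Matrix.mulVec_smul, Nrm_smul (by positivity), smul_smul]

end

end Stmt0Aux

set_option maxHeartbeats 1000000

open Stmt0Aux

/-- if `(T i)` is a family of nonzero nonnegative `k×k` matrices whose columns are
either zero or positive, with Hilbert-metric diameters uniformly bounded by `Δ`, then for any
sequence of indices the normalized images `T̃_n · x` converge, uniformly in `x ∈ C'`, to a
limit `x̃ ∈ C'` independent of `x`. -/
theorem stmt0 {k : ℕ} (hk : 1 ≤ k) {I : Type*} (T : I → Matrix (Fin k) (Fin k) ℝ)
    (hnn : ∀ i a b, 0 ≤ T i a b) (hnz : ∀ i, T i ≠ 0)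
    (hcol : ∀ i b, (∀ a, T i a b = 0) ∨ (∀ a, 0 < T i a b))
    (Δ : ℝ) (hΔ : 0 ≤ Δ)
    (hdiam : ∀ i, ∀ v ∈ posUnit k, ∀ w ∈ posUnit k,
      hilbertDist (matAct (T i) v) (matAct (T i) w) ≤ Δ)
    (idx : ℕ → I) :
    ∃ xlim ∈ posUnit k, ∀ ε > 0, ∃ n₀ : ℕ, ∀ n ≥ n₀, ∀ x ∈ posUnit k,
      Real.sqrt (∑ a, (matAct (((List.range n).map fun j => T (idx j)).prod) x a - xlim a) ^ 2)
        < ε := by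
  haveI : Nonempty (Fin k) := ⟨⟨0, hk⟩⟩
  set E := Real.exp Δ with hEdef
  have hE1 : (1:ℝ) ≤ E := Real.one_le_exp hΔ
  have hE0 : (0:ℝ) < E := lt_of_lt_of_le one_pos hE1
  set lam := 1 - E⁻¹ with hlamdef
  have hlam0 : (0:ℝ) ≤ lam := by
    have : E⁻¹ ≤ 1 := inv_le_one_of_one_le₀ hE1
    rw [hlamdef]; linarith
  have hlam1 : lam < 1 := by
    have : (0:ℝ) < E⁻¹ := by positivity
    rw [hlamdef]; linarith
  have hpos : ∀ i v, Pos v → Pos ((T i).mulVec v) := fun i v hv =>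
    mulVec_pos (hnn i) (hnz i) (hcol i) hv
  have hd : ∀ i z y, Pos z → Pos y →
      S ((T i).mulVec z) ((T i).mulVec y) * S ((T i).mulVec y) ((T i).mulVec z) ≤ E := by
    intro i z y hz hy
    obtain ⟨c, hc, hcz⟩ := matAct_smul_form (hpos i) hz
    obtain ⟨c', hc', hcy⟩ := matAct_smul_form (hpos i) hy
    have hzU : (Nrm z)⁻¹ • z ∈ posUnit k := by
      obtain ⟨h1, h2⟩ := normalize_posUnit hz
      exact ⟨h1, h2⟩
    have hyU : (Nrm y)⁻¹ • y ∈ posUnit k := by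
      obtain ⟨h1, h2⟩ := normalize_posUnit hy
      exact ⟨h1, h2⟩
    have hD := hdiam i _ hzU _ hyU
    have hlog : hilbertDist (matAct (T i) ((Nrm z)⁻¹ • z)) (matAct (T i) ((Nrm y)⁻¹ • y))
        = Real.log (S ((T i).mulVec z) ((T i).mulVec y) *
            S ((T i).mulVec y) ((T i).mulVec z)) := by
      rw [hcz, hcy]
      show Real.log (S (c • (T i).mulVec z) (c' • (T i).mulVec y) *
        S (c' • (T i).mulVec y) (c • (T i).mulVec z)) = _
      rw [ratio_smul hc hc']
    rw [hlog] at hD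
    have h1 : (1:ℝ) ≤ S ((T i).mulVec z) ((T i).mulVec y) *
        S ((T i).mulVec y) ((T i).mulVec z) := one_le_ratio (hpos i z hz) (hpos i y hy)
    exact (Real.log_le_iff_le_exp (by linarith)).mp hD
  set v₀ : Fin k → ℝ := fun _ => 1 with hv₀def
  have hv₀ : Pos v₀ := fun i => one_pos
  set P : ℕ → Matrix (Fin k) (Fin k) ℝ := Pm T idx with hPdef
  set u : ℕ → (Fin k → ℝ) := fun n => matAct (P n) v₀ with hudef
  have huU : ∀ n, u n ∈ posUnit k := by
    intro n
    have h1 : Pos ((P n).mulVec v₀) := Pm_pos hpos idx n hv₀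
    obtain ⟨ha, hb⟩ := normalize_posUnit h1
    exact ⟨ha, hb⟩
  have hkey : ∀ n, 1 ≤ n → ∀ x, Pos x →
      S ((P n).mulVec x) ((P n).mulVec v₀) * S ((P n).mulVec v₀) ((P n).mulVec x)
        ≤ 1 + lam ^ (n - 1) * (E - 1) := fun n hn x hx =>
    key hnn hpos hE1 hd n hn idx x v₀ hx hv₀
  have hmU : ∀ x, Pos x → ∀ n, matAct (P n) x ∈ posUnit k := by
    intro x hx n
    have h1 : Pos ((P n).mulVec x) := Pm_pos hpos idx n hx
    obtain ⟨ha, hb⟩ := normalize_posUnit h1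
    exact ⟨ha, hb⟩
  have hdistb : ∀ n, 1 ≤ n → ∀ x, Pos x →
      Nrm (matAct (P n) x - u n) ≤ 2 * (lam ^ (n - 1) * (E - 1)) := by
    intro n hn x hx
    have hx' : Pos ((P n).mulVec x) := Pm_pos hpos idx n hx
    have hv' : Pos ((P n).mulVec v₀) := Pm_pos hpos idx n hv₀
    have hratio : S (matAct (P n) x) (u n) * S (u n) (matAct (P n) x)
        = S ((P n).mulVec x) ((P n).mulVec v₀) * S ((P n).mulVec v₀) ((P n).mulVec x) := by
      simp only [hudef, matAct_eq]
      exact ratio_smul (inv_pos.mpr (Nrm_pos hx')) (inv_pos.mpr (Nrm_pos hv')) _ _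
    have heu := euclid (hmU x hx n) (huU n)
    rw [hratio] at heu
    have := hkey n hn x hx
    calc Nrm (matAct (P n) x - u n)
        ≤ 2 * (S ((P n).mulVec x) ((P n).mulVec v₀) *
            S ((P n).mulVec v₀) ((P n).mulVec x) - 1) := heu
      _ ≤ 2 * (lam ^ (n - 1) * (E - 1)) := by linarith
  have hshift : ∀ n m, 1 ≤ n → u (n + m) = matAct (P n)
      ((Pm T (fun j => idx (n + j)) m).mulVec v₀) := by
    intro n m hn
    have hQ' : (P (n + m)).mulVec v₀
        = (P n).mulVec ((Pm T (fun j => idx (n + j)) m).mulVec v₀) := by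
      rw [hPdef, Pm_add]
      exact (Matrix.mulVec_mulVec _ _ _).symm
    simp only [hudef, matAct_eq, hQ']
  have hcau : ∀ n m, 1 ≤ n → Nrm (u (n + m) - u n) ≤ 2 * (lam ^ (n - 1) * (E - 1)) := by
    intro n m hn
    have hqpos : Pos ((Pm T (fun j => idx (n + j)) m).mulVec v₀) := Pm_pos hpos _ m hv₀
    rw [hshift n m hn]
    exact hdistb n hn _ hqpos
  have htendpow : Tendsto (fun j : ℕ => 2 * (lam ^ j * (E - 1))) atTop (𝓝 0) := by
    have h1 := tendsto_pow_atTop_nhds_zero_of_lt_one hlam0 hlam1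
    have h2 := (h1.mul_const (E - 1)).const_mul 2
    simpa using h2
  have hcauchy : CauchySeq u := by
    rw [Metric.cauchySeq_iff']
    intro ε hε
    obtain ⟨j₀, hj₀⟩ := eventually_atTop.mp (htendpow.eventually (gt_mem_nhds hε))
    refine ⟨j₀ + 1, fun n hn => ?_⟩
    have hsplit : (j₀ + 1) + (n - (j₀ + 1)) = n := by omega
    have h3 := hcau (j₀ + 1) (n - (j₀ + 1)) (by omega)
    rw [hsplit] at h3
    have h4 : dist (u n) (u (j₀ + 1)) ≤ 2 * (lam ^ j₀ * (E - 1)) := by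
      calc dist (u n) (u (j₀ + 1)) = ‖u n - u (j₀ + 1)‖ := dist_eq_norm _ _
        _ ≤ Nrm (u n - u (j₀ + 1)) := norm_le_Nrm _
        _ ≤ 2 * (lam ^ ((j₀ + 1) - 1) * (E - 1)) := h3
        _ = 2 * (lam ^ j₀ * (E - 1)) := by norm_num
    exact lt_of_le_of_lt h4 (hj₀ j₀ le_rfl)
  obtain ⟨xl, hxl⟩ := cauchySeq_tendsto_of_complete hcauchy
  have hNcont : Continuous (fun w : Fin k → ℝ => Nrm w) := by
    apply Real.continuous_sqrt.comp
    exact continuous_finset_sum _ (fun i _ => (continuous_apply i).pow 2)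
  have hNone : Nrm xl = 1 := by
    have h1 : Tendsto (fun n => Nrm (u n)) atTop (𝓝 (Nrm xl)) := (hNcont.tendsto xl).comp hxl
    have h2 : (fun n => Nrm (u n)) = fun _ => 1 := funext fun n => (huU n).1
    rw [h2] at h1
    exact tendsto_nhds_unique h1 tendsto_const_nhds
  have hxlpos : Pos xl := by
    intro i
    have h1 : Tendsto (fun n => u n i) atTop (𝓝 (xl i)) :=
      ((continuous_apply i).tendsto xl).comp hxl
    have h2 : ∀ n, 1 ≤ n → E⁻¹ * u 1 i ≤ u n i := by
      intro n hn
      have hshift2 := hshift 1 (n - 1) le_rfl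
      rw [show 1 + (n - 1) = n by omega] at hshift2
      have hqpos : Pos ((Pm T (fun j => idx (1 + j)) (n - 1)).mulVec v₀) :=
        Pm_pos hpos _ _ hv₀
      have hr : S (u n) (u 1) * S (u 1) (u n) ≤ E := by
        have hx' : Pos ((P 1).mulVec ((Pm T (fun j => idx (1 + j)) (n - 1)).mulVec v₀)) :=
          Pm_pos hpos idx 1 hqpos
        have hv' : Pos ((P 1).mulVec v₀) := Pm_pos hpos idx 1 hv₀
        have hratio : S (u n) (u 1) * S (u 1) (u n)
            = S ((P 1).mulVec ((Pm T (fun j => idx (1 + j)) (n - 1)).mulVec v₀))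
                ((P 1).mulVec v₀) *
              S ((P 1).mulVec v₀)
                ((P 1).mulVec ((Pm T (fun j => idx (1 + j)) (n - 1)).mulVec v₀)) := by
          rw [hshift2]
          simp only [hudef, matAct_eq]
          exact ratio_smul (inv_pos.mpr (Nrm_pos hx')) (inv_pos.mpr (Nrm_pos hv')) _ _
        rw [hratio]
        calc S ((P 1).mulVec ((Pm T (fun j => idx (1 + j)) (n - 1)).mulVec v₀))
              ((P 1).mulVec v₀) *
            S ((P 1).mulVec v₀)
              ((P 1).mulVec ((Pm T (fun j => idx (1 + j)) (n - 1)).mulVec v₀))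
            ≤ 1 + lam ^ (1 - 1) * (E - 1) := hkey 1 le_rfl _ hqpos
          _ = E := by norm_num
      have hs1 : 1 ≤ S (u n) (u 1) := one_le_S_unit (huU 1) (huU n)
      have hSpos : 0 < S (u 1) (u n) := S_pos (huU 1).2 (huU n).2
      have hSle : S (u 1) (u n) ≤ E := by nlinarith
      have h5 := le_S_mul (u 1) (huU n).2 i
      have h6 := (huU n).2 i
      rw [inv_mul_le_iff₀ hE0]
      nlinarith
    have h3 : E⁻¹ * u 1 i ≤ xl i := ge_of_tendsto h1 (eventually_atTop.mpr ⟨1, h2⟩)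
    have h7 := (huU 1).2 i
    have : (0:ℝ) < E⁻¹ * u 1 i := by positivity
    linarith
  refine ⟨xl, ⟨hNone, hxlpos⟩, ?_⟩
  intro ε hε
  set s := Real.sqrt k with hsdef
  have hk0 : (0:ℝ) < (k:ℝ) := by exact_mod_cast hk
  have hs0 : (0:ℝ) < s := Real.sqrt_pos.mpr hk0
  have ht2 : Tendsto (fun j : ℕ => s * (2 * (lam ^ j * (E - 1)))) atTop (𝓝 0) := by
    simpa using htendpow.const_mul s
  obtain ⟨j₀, hj₀⟩ := eventually_atTop.mp (ht2.eventually (gt_mem_nhds (half_pos hε)))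
  have hεs : 0 < ε / (2 * s) := by positivity
  obtain ⟨n₂, hn₂⟩ := Metric.tendsto_atTop.mp hxl (ε / (2 * s)) hεs
  refine ⟨max (j₀ + 1) n₂, fun n hn x hxU => ?_⟩
  have hn1 : 1 ≤ n := le_trans (le_trans (by omega : 1 ≤ j₀ + 1) (le_max_left _ _)) hn
  have hnj : j₀ ≤ n - 1 := by
    have := le_trans (le_max_left (j₀ + 1) n₂) hn
    omega
  have hnn2 : n₂ ≤ n := le_trans (le_max_right _ _) hn
  have hA : Nrm (matAct (P n) x - u n) ≤ 2 * (lam ^ (n - 1) * (E - 1)) := hdistb n hn1 x hxU.2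
  show Real.sqrt (∑ a, (matAct (P n) x a - xl a) ^ 2) < ε
  have hNeq : Real.sqrt (∑ a, (matAct (P n) x a - xl a) ^ 2) = Nrm (matAct (P n) x - xl) := rfl
  rw [hNeq]
  have htri : ‖matAct (P n) x - xl‖ ≤ ‖matAct (P n) x - u n‖ + ‖u n - xl‖ := by
    have h8 := dist_triangle (matAct (P n) x) (u n) xl
    simpa [dist_eq_norm] using h8
  have hb1 : ‖matAct (P n) x - u n‖ ≤ 2 * (lam ^ (n - 1) * (E - 1)) :=
    le_trans (norm_le_Nrm _) hA
  have hb2 : ‖u n - xl‖ < ε / (2 * s) := by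
    have h8 := hn₂ n hnn2
    rwa [dist_eq_norm] at h8
  have hfin1 : Nrm (matAct (P n) x - xl)
      ≤ s * (2 * (lam ^ (n - 1) * (E - 1))) + s * ‖u n - xl‖ := by
    calc Nrm (matAct (P n) x - xl) ≤ s * ‖matAct (P n) x - xl‖ := Nrm_le_norm _
      _ ≤ s * (‖matAct (P n) x - u n‖ + ‖u n - xl‖) :=
          mul_le_mul_of_nonneg_left htri hs0.le
      _ = s * ‖matAct (P n) x - u n‖ + s * ‖u n - xl‖ := mul_add _ _ _
      _ ≤ s * (2 * (lam ^ (n - 1) * (E - 1))) + s * ‖u n - xl‖ :=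
          add_le_add_left (mul_le_mul_of_nonneg_left hb1 hs0.le) _
  have h9 := hj₀ (n - 1) hnj
  have h10 : s * (ε / (2 * s)) = ε / 2 := by
    field_simp
  have h11 : s * ‖u n - xl‖ < ε / 2 := by
    have h12 := mul_lt_mul_of_pos_left hb2 hs0
    rw [h10] at h12
    exact h12
  linarith
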